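/- Let G, G₁, G₂, H, H₁, H₂ be finite groups with H, H₁, H₂ nontrivial. Then (1) Λ_{G, H₁ × H₂} = max{Λ_{G,H₁}, Λ_{G,H₂}}, and (2) Λ_{G₁ × G₂, H} = max{Λ_{G₁,H}, Λ_{G₂,H}}. -/
import Mathlib


/-- An affine homomorphism from `G` to `H` is a function of the form
`g ↦ h * φ₀ g` for a fixed `h : H` and a group homomorphism `φ₀ : G →* H`. -/
def IsAffineHom {G H : Type*} [Group G] [Group H] (φ : G → H) : Prop :=
  ∃ (h : H) (φ₀ : G →* H), ∀ g : G, φ g = h * φ₀ g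

/-- The agreement of two functions `f g : G → H`: the fraction of inputs
on which they agree, `|Eq(f,g)| / |G|`. -/
noncomputable def agr {G H : Type*} (f g : G → H) : ℝ :=
  (Nat.card {x : G // f x = g x} : ℝ) / (Nat.card G : ℝ)

/-- The maximum agreement `Λ_{G,H}`: the maximum of `agr φ ψ` over all pairs of
distinct affine homomorphisms `φ ψ : G → H`. -/
noncomputable def Lambda (G H : Type*) [Group G] [Group H] : ℝ :=
  sSup {r : ℝ | ∃ φ ψ : G → H,
    IsAffineHom φ ∧ IsAffineHom ψ ∧ φ ≠ ψ ∧ r = agr φ ψ}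

section basic
variable {G H H' : Type*}

lemma agr_nonneg (f g : G → H) : 0 ≤ agr f g := by
  unfold agr; positivity

lemma card_subtype_le [Finite G] (P : G → Prop) :
    Nat.card {x : G // P x} ≤ Nat.card G :=
  Nat.card_le_card_of_injective Subtype.val Subtype.val_injective

lemma agr_le_one [Finite G] (f g : G → H) : agr f g ≤ 1 :=
  div_le_one_of_le₀ (by exact_mod_cast card_subtype_le _) (Nat.cast_nonneg _)

lemma agr_mono [Finite G] {f g : G → H} {f' g' : G → H'}
    (h : ∀ x, f x = g x → f' x = g' x) : agr f g ≤ agr f' g' := by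
  have hc : Nat.card {x : G // f x = g x} ≤ Nat.card {x : G // f' x = g' x} :=
    Nat.card_le_card_of_injective (fun x => ⟨x.1, h x.1 x.2⟩)
      (by intro a b hab; exact Subtype.ext (by simpa [Subtype.ext_iff] using hab))
  unfold agr
  gcongr

lemma agr_congr {f g : G → H} {f' g' : G → H'}
    (h : ∀ x, f x = g x ↔ f' x = g' x) : agr f g = agr f' g' := by
  unfold agr
  congr 1
  exact_mod_cast Nat.card_congr (Equiv.subtypeEquivRight h)
end basic

section lam
variable {G H : Type*} [Group G] [Group H]

def lamSet (G H : Type*) [Group G] [Group H] : Set ℝ :=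
  {r : ℝ | ∃ φ ψ : G → H,
    IsAffineHom φ ∧ IsAffineHom ψ ∧ φ ≠ ψ ∧ r = agr φ ψ}

lemma Lambda_eq : Lambda G H = sSup (lamSet G H) := rfl

lemma isAffineHom_const (h : H) : IsAffineHom (fun _ : G => h) :=
  ⟨h, 1, fun g => by simp⟩

lemma lamSet_nonempty [Nontrivial H] : (lamSet G H).Nonempty := by
  obtain ⟨h, hh⟩ := exists_ne (1 : H)
  exact ⟨agr (fun _ : G => h) (fun _ : G => (1:H)), (fun _ => h), (fun _ => 1),
    isAffineHom_const h, isAffineHom_const 1,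
    fun he => hh (congrFun he 1), rfl⟩

lemma lamSet_bddAbove [Finite G] : BddAbove (lamSet G H) := by
  refine ⟨1, fun r hr => ?_⟩
  obtain ⟨φ, ψ, -, -, -, rfl⟩ := hr
  exact agr_le_one φ ψ

lemma agr_le_Lambda [Finite G] {φ ψ : G → H} (hφ : IsAffineHom φ)
    (hψ : IsAffineHom ψ) (hne : φ ≠ ψ) : agr φ ψ ≤ Lambda G H :=
  le_csSup lamSet_bddAbove ⟨φ, ψ, hφ, hψ, hne, rfl⟩

lemma Lambda_le [Nontrivial H] {M : ℝ}
    (h : ∀ φ ψ : G → H, IsAffineHom φ → IsAffineHom ψ → φ ≠ ψ → agr φ ψ ≤ M) :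
    Lambda G H ≤ M := by
  refine csSup_le lamSet_nonempty ?_
  rintro r ⟨φ, ψ, hφ, hψ, hne, rfl⟩
  exact h φ ψ hφ hψ hne

lemma Lambda_nonneg [Finite G] [Nontrivial H] : 0 ≤ Lambda G H := by
  obtain ⟨r, φ, ψ, hφ, hψ, hne, rfl⟩ := lamSet_nonempty (G := G) (H := H)
  exact (agr_nonneg φ ψ).trans (agr_le_Lambda hφ hψ hne)

end lam

section aff
variable {G G₁ G₂ H H₁ H₂ : Type*} [Group G] [Group G₁] [Group G₂]
  [Group H] [Group H₁] [Group H₂]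

lemma isAffineHom_pair_one {φ : G → H₁} (hφ : IsAffineHom φ) :
    IsAffineHom (fun g => ((φ g, 1) : H₁ × H₂)) := by
  obtain ⟨h, φ₀, hφ⟩ := hφ
  exact ⟨(h, 1), φ₀.prod 1, fun g => by simp [hφ g, Prod.ext_iff]⟩

lemma isAffineHom_one_pair {φ : G → H₂} (hφ : IsAffineHom φ) :
    IsAffineHom (fun g => ((1, φ g) : H₁ × H₂)) := by
  obtain ⟨h, φ₀, hφ⟩ := hφ
  exact ⟨(1, h), (1 : G →* H₁).prod φ₀, fun g => by simp [hφ g, Prod.ext_iff]⟩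

lemma isAffineHom_fst {Φ : G → H₁ × H₂} (hΦ : IsAffineHom Φ) :
    IsAffineHom (fun g => (Φ g).1) := by
  obtain ⟨h, Φ₀, hΦ⟩ := hΦ
  exact ⟨h.1, (MonoidHom.fst H₁ H₂).comp Φ₀, fun g => by simp [hΦ g]⟩

lemma isAffineHom_snd {Φ : G → H₁ × H₂} (hΦ : IsAffineHom Φ) :
    IsAffineHom (fun g => (Φ g).2) := by
  obtain ⟨h, Φ₀, hΦ⟩ := hΦ
  exact ⟨h.2, (MonoidHom.snd H₁ H₂).comp Φ₀, fun g => by simp [hΦ g]⟩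

lemma isAffineHom_comp_fst {φ : G₁ → H} (hφ : IsAffineHom φ) :
    IsAffineHom (fun p : G₁ × G₂ => φ p.1) := by
  obtain ⟨h, φ₀, hφ⟩ := hφ
  exact ⟨h, φ₀.comp (MonoidHom.fst G₁ G₂), fun p => by simp [hφ p.1]⟩

lemma isAffineHom_slice_left {Φ : G₁ × G₂ → H} (hΦ : IsAffineHom Φ) (c : G₂) :
    IsAffineHom (fun x : G₁ => Φ (x, c)) := by
  obtain ⟨h, Φ₀, hΦ⟩ := hΦ
  refine ⟨h * Φ₀ (1, c), Φ₀.comp (MonoidHom.inl G₁ G₂), fun x => ?_⟩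
  show Φ (x, c) = _
  rw [hΦ, mul_assoc]
  simp only [MonoidHom.comp_apply, MonoidHom.inl_apply, ← map_mul]
  norm_num

lemma isAffineHom_slice_right {Φ : G₁ × G₂ → H} (hΦ : IsAffineHom Φ) (c : G₁) :
    IsAffineHom (fun y : G₂ => Φ (c, y)) := by
  obtain ⟨h, Φ₀, hΦ⟩ := hΦ
  refine ⟨h * Φ₀ (c, 1), Φ₀.comp (MonoidHom.inr G₁ G₂), fun y => ?_⟩
  show Φ (c, y) = _
  rw [hΦ, mul_assoc]
  simp only [MonoidHom.comp_apply, MonoidHom.inr_apply, ← map_mul]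
  norm_num

lemma affine_rect {Φ : G₁ × G₂ → H} (hΦ : IsAffineHom Φ) (c₁ : G₁) (c₂ : G₂)
    (x : G₁) (y : G₂) : Φ (x, y) = Φ (x, c₂) * (Φ (c₁, c₂))⁻¹ * Φ (c₁, y) := by
  obtain ⟨h, Φ₀, hΦ⟩ := hΦ
  have key : Φ₀ (x, y) = Φ₀ (x, c₂) * (Φ₀ (c₁, c₂))⁻¹ * Φ₀ (c₁, y) := by
    rw [← map_inv, ← map_mul, ← map_mul]
    congr 1
    ext <;> simp
  simp only [hΦ, key]
  group

end aff

section count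
variable {G₁ G₂ H : Type*}

def eqSigmaLeft (P : G₁ × G₂ → Prop) :
    {p : G₁ × G₂ // P p} ≃ Σ y : G₂, {x : G₁ // P (x, y)} where
  toFun p := ⟨p.1.2, ⟨p.1.1, by obtain ⟨⟨a, b⟩, hp⟩ := p; exact hp⟩⟩
  invFun s := ⟨(s.2.1, s.1), s.2.2⟩
  left_inv := by rintro ⟨⟨a, b⟩, hp⟩; rfl
  right_inv := by rintro ⟨y, x, hp⟩; rfl

def eqSigmaRight (P : G₁ × G₂ → Prop) :
    {p : G₁ × G₂ // P p} ≃ Σ x : G₁, {y : G₂ // P (x, y)} where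
  toFun p := ⟨p.1.1, ⟨p.1.2, by obtain ⟨⟨a, b⟩, hp⟩ := p; exact hp⟩⟩
  invFun s := ⟨(s.1, s.2.1), s.2.2⟩
  left_inv := by rintro ⟨⟨a, b⟩, hp⟩; rfl
  right_inv := by rintro ⟨x, y, hp⟩; rfl

lemma card_sigma_nat {ι : Type*} [Fintype ι] (T : ι → Type*) [∀ i, Fintype (T i)] :
    Nat.card (Σ i, T i) = ∑ i, Nat.card (T i) := by
  simp [Nat.card_eq_fintype_card]

lemma agr_prod_le_left [Finite G₁] [Finite G₂] [Nonempty G₁] [Nonempty G₂]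
    {F F' : G₁ × G₂ → H} {M : ℝ}
    (h : ∀ y : G₂, agr (fun x => F (x, y)) (fun x => F' (x, y)) ≤ M) :
    agr F F' ≤ M := by
  have := Fintype.ofFinite G₁
  have := Fintype.ofFinite G₂
  have hn₁ : (0:ℝ) < Nat.card G₁ := by exact_mod_cast Nat.card_pos
  have hn₂ : (0:ℝ) < Nat.card G₂ := by exact_mod_cast Nat.card_pos
  have hcard : Nat.card {p : G₁ × G₂ // F p = F' p}
      = ∑ y : G₂, Nat.card {x : G₁ // F (x, y) = F' (x, y)} := by
    rw [Nat.card_congr (eqSigmaLeft (fun p => F p = F' p))]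
    classical
    exact card_sigma_nat _
  have hterm : ∀ y : G₂,
      (Nat.card {x : G₁ // F (x, y) = F' (x, y)} : ℝ) ≤ M * Nat.card G₁ := by
    intro y
    have := h y
    unfold agr at this
    exact (div_le_iff₀ hn₁).1 this
  have hsum : (Nat.card {p : G₁ × G₂ // F p = F' p} : ℝ)
      ≤ Nat.card G₂ * (M * Nat.card G₁) := by
    rw [hcard]
    push_cast
    calc (∑ y : G₂, (Nat.card {x : G₁ // F (x, y) = F' (x, y)} : ℝ))
        ≤ ∑ _y : G₂, M * Nat.card G₁ := Finset.sum_le_sum fun y _ => hterm y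
      _ = Nat.card G₂ * (M * Nat.card G₁) := by
          simp [Finset.sum_const, Nat.card_eq_fintype_card]
  unfold agr
  rw [Nat.card_prod, div_le_iff₀ (by push_cast; positivity)]
  push_cast
  push_cast at hsum
  nlinarith [hsum]

lemma agr_prod_le_right [Finite G₁] [Finite G₂] [Nonempty G₁] [Nonempty G₂]
    {F F' : G₁ × G₂ → H} {M : ℝ}
    (h : ∀ x : G₁, agr (fun y => F (x, y)) (fun y => F' (x, y)) ≤ M) :
    agr F F' ≤ M := by
  have := Fintype.ofFinite G₁
  have := Fintype.ofFinite G₂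
  have hn₁ : (0:ℝ) < Nat.card G₁ := by exact_mod_cast Nat.card_pos
  have hn₂ : (0:ℝ) < Nat.card G₂ := by exact_mod_cast Nat.card_pos
  have hcard : Nat.card {p : G₁ × G₂ // F p = F' p}
      = ∑ x : G₁, Nat.card {y : G₂ // F (x, y) = F' (x, y)} := by
    rw [Nat.card_congr (eqSigmaRight (fun p => F p = F' p))]
    classical
    exact card_sigma_nat _
  have hterm : ∀ x : G₁,
      (Nat.card {y : G₂ // F (x, y) = F' (x, y)} : ℝ) ≤ M * Nat.card G₂ := by
    intro x
    have := h x
    unfold agr at this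
    exact (div_le_iff₀ hn₂).1 this
  have hsum : (Nat.card {p : G₁ × G₂ // F p = F' p} : ℝ)
      ≤ Nat.card G₁ * (M * Nat.card G₂) := by
    rw [hcard]
    push_cast
    calc (∑ x : G₁, (Nat.card {y : G₂ // F (x, y) = F' (x, y)} : ℝ))
        ≤ ∑ _x : G₁, M * Nat.card G₂ := Finset.sum_le_sum fun x _ => hterm x
      _ = Nat.card G₁ * (M * Nat.card G₂) := by
          simp [Finset.sum_const, Nat.card_eq_fintype_card]
  unfold agr
  rw [Nat.card_prod, div_le_iff₀ (by push_cast; positivity)]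
  push_cast
  push_cast at hsum
  nlinarith [hsum]

lemma agr_comp_fst [Finite G₁] [Finite G₂] [Nonempty G₁] [Nonempty G₂]
    (φ ψ : G₁ → H) :
    agr (fun p : G₁ × G₂ => φ p.1) (fun p : G₁ × G₂ => ψ p.1) = agr φ ψ := by
  have hn₂ : (0:ℝ) < Nat.card G₂ := by exact_mod_cast Nat.card_pos
  unfold agr
  have hcard : Nat.card {p : G₁ × G₂ // φ p.1 = ψ p.1}
      = Nat.card {x : G₁ // φ x = ψ x} * Nat.card G₂ := by
    rw [← Nat.card_prod]
    exact Nat.card_congr ⟨fun p => (⟨p.1.1, p.2⟩, p.1.2), fun q => ⟨(q.1.1, q.2), q.1.2⟩,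
      by rintro ⟨⟨a, b⟩, hp⟩; rfl, by rintro ⟨⟨x, hx⟩, y⟩; rfl⟩
  rw [hcard, Nat.card_prod]
  push_cast
  rw [mul_div_mul_right _ _ (ne_of_gt hn₂)]

end count

theorem direct_product_lambda (G G₁ G₂ H H₁ H₂ : Type*)
    [Group G] [Group G₁] [Group G₂] [Group H] [Group H₁] [Group H₂]
    [Finite G] [Finite G₁] [Finite G₂] [Finite H] [Finite H₁] [Finite H₂]
    [Nontrivial H] [Nontrivial H₁] [Nontrivial H₂] :
    Lambda G (H₁ × H₂) = max (Lambda G H₁) (Lambda G H₂) ∧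
    Lambda (G₁ × G₂) H = max (Lambda G₁ H) (Lambda G₂ H) := by
  constructor
  · -- Part 1
    apply le_antisymm
    · refine Lambda_le fun Φ Ψ hΦ hΨ hne => ?_
      by_cases hf : (fun g => (Φ g).1) = (fun g => (Ψ g).1)
      · -- snd components differ
        have hs : (fun g => (Φ g).2) ≠ (fun g => (Ψ g).2) := by
          intro hs
          exact hne (funext fun g => Prod.ext (congrFun hf g) (congrFun hs g))
        refine le_trans ?_ (le_max_right _ _)
        refine le_trans (agr_mono fun x hx => ?_) (agr_le_Lambda
          (isAffineHom_snd hΦ) (isAffineHom_snd hΨ) hs)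
        exact congrArg Prod.snd hx
      · refine le_trans ?_ (le_max_left _ _)
        refine le_trans (agr_mono fun x hx => ?_) (agr_le_Lambda
          (isAffineHom_fst hΦ) (isAffineHom_fst hΨ) hf)
        exact congrArg Prod.fst hx
    · refine max_le ?_ ?_
      · refine Lambda_le fun φ ψ hφ hψ hne => ?_
        have hne' : (fun g => ((φ g, 1) : H₁ × H₂)) ≠ (fun g => ((ψ g, 1) : H₁ × H₂)) := by
          intro he
          exact hne (funext fun g => congrArg Prod.fst (congrFun he g))
        refine le_trans (le_of_eq (agr_congr fun x => ?_)) (agr_le_Lambda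
          (isAffineHom_pair_one hφ) (isAffineHom_pair_one hψ) hne')
        constructor
        · intro hx; rw [hx]
        · intro hx; exact congrArg Prod.fst hx
      · refine Lambda_le fun φ ψ hφ hψ hne => ?_
        have hne' : (fun g => ((1, φ g) : H₁ × H₂)) ≠ (fun g => ((1, ψ g) : H₁ × H₂)) := by
          intro he
          exact hne (funext fun g => congrArg Prod.snd (congrFun he g))
        refine le_trans (le_of_eq (agr_congr fun x => ?_)) (agr_le_Lambda
          (isAffineHom_one_pair hφ) (isAffineHom_one_pair hψ) hne')
        constructor
        · intro hx; rw [hx]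
        · intro hx; exact congrArg Prod.snd hx
  · -- Part 2
    apply le_antisymm
    · refine Lambda_le fun Φ Ψ hΦ hΨ hne => ?_
      by_cases hA : ∀ y : G₂, (fun x => Φ (x, y)) ≠ (fun x => Ψ (x, y))
      · refine agr_prod_le_left fun y => ?_
        exact le_trans (agr_le_Lambda (isAffineHom_slice_left hΦ y)
          (isAffineHom_slice_left hΨ y) (hA y)) (le_max_left _ _)
      · push_neg at hA
        obtain ⟨c₂, hc₂⟩ := hA
        have hB : ∀ x : G₁, (fun y => Φ (x, y)) ≠ (fun y => Ψ (x, y)) := by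
          intro c₁ hc₁
          apply hne
          funext p
          obtain ⟨x, y⟩ := p
          rw [affine_rect hΦ c₁ c₂ x y, affine_rect hΨ c₁ c₂ x y,
            congrFun hc₂ x, congrFun hc₂ c₁, congrFun hc₁ y]
        refine agr_prod_le_right fun x => ?_
        exact le_trans (agr_le_Lambda (isAffineHom_slice_right hΦ x)
          (isAffineHom_slice_right hΨ x) (hB x)) (le_max_right _ _)
    · refine max_le ?_ ?_
      · refine Lambda_le fun φ ψ hφ hψ hne => ?_
        have hne' : (fun p : G₁ × G₂ => φ p.1) ≠ (fun p : G₁ × G₂ => ψ p.1) := by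
          intro he
          exact hne (funext fun x => congrFun he (x, 1))
        rw [← agr_comp_fst (G₂ := G₂) φ ψ]
        exact agr_le_Lambda (isAffineHom_comp_fst hφ) (isAffineHom_comp_fst hψ) hne'
      · refine Lambda_le fun φ ψ hφ hψ hne => ?_
        have hne' : (fun p : G₁ × G₂ => φ p.2) ≠ (fun p : G₁ × G₂ => ψ p.2) := by
          intro he
          exact hne (funext fun y => congrFun he (1, y))
        have haff : ∀ χ : G₂ → H, IsAffineHom χ →
            IsAffineHom (fun p : G₁ × G₂ => χ p.2) := by
          rintro χ ⟨h, χ₀, hχ⟩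
          exact ⟨h, χ₀.comp (MonoidHom.snd G₁ G₂), fun p => by simp [hχ p.2]⟩
        have hagr : agr (fun p : G₁ × G₂ => φ p.2) (fun p : G₁ × G₂ => ψ p.2)
            = agr φ ψ := by
          have hn₁ : (0:ℝ) < Nat.card G₁ := by exact_mod_cast Nat.card_pos
          unfold agr
          have hcard : Nat.card {p : G₁ × G₂ // φ p.2 = ψ p.2}
              = Nat.card G₁ * Nat.card {y : G₂ // φ y = ψ y} := by
            rw [← Nat.card_prod]
            exact Nat.card_congr ⟨fun p => (p.1.1, ⟨p.1.2, p.2⟩),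
              fun q => ⟨(q.1, q.2.1), q.2.2⟩,
              by rintro ⟨⟨a, b⟩, hp⟩; rfl, by rintro ⟨x, ⟨y, hy⟩⟩; rfl⟩
          rw [hcard, Nat.card_prod]
          push_cast
          rw [mul_comm ((Nat.card G₁ : ℝ)) _, mul_comm ((Nat.card G₁ : ℝ)) _,
            mul_div_mul_right _ _ (ne_of_gt hn₁)]
        rw [← hagr]
        exact agr_le_Lambda (haff φ hφ) (haff ψ hψ) hne'
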